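/- In G(Σ, e) one has the relation Σ_{i=1}^{2^ν} Ψ_{w_i} = −(6s₂ + 4·2^ν)·Ψ_w. -/

import Mathlib

/-- The subgroup of relations: `e s • ψ s - e t • ψ t` for all `s t`, together with
`∑ s, ψ s`. -/
noncomputable def relSub {S : Type*} [Fintype S] (e : S → ℤ) : AddSubgroup (S →₀ ℤ) :=
  AddSubgroup.closure
    ({x | ∃ s t : S, x = Finsupp.single s (e s) - Finsupp.single t (e t)} ∪
      {∑ s : S, Finsupp.single s 1})

/-- `G(Σ, e)`: the quotient of the free abelian group on `Σ` by the relations. -/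
abbrev CompGrp {S : Type*} [Fintype S] (e : S → ℤ) : Type _ :=
  (S →₀ ℤ) ⧸ relSub e

/-- `Ψ s`: the image of the basis element `ψ s` in `G(Σ, e)`. -/
noncomputable def Psi {S : Type*} [Fintype S] (e : S → ℤ) (s : S) : CompGrp e :=
  QuotientAddGroup.mk (Finsupp.single s 1)

/-- `Σ = Σ₂ ⊔ Σ₄ ⊔ Σ₆` with `#Σ₂ = s₂` and `#Σ₄ = #Σ₆ = 2^ν`. -/
abbrev Sig4 (s₂ ν : ℕ) : Type := Fin s₂ ⊕ (Fin (2 ^ ν) ⊕ Fin (2 ^ ν))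

/-- `e ≡ 1` on `Σ₂`, `e ≡ 2` on `Σ₄` and `e ≡ 3` on `Σ₆`. -/
def e4 (s₂ ν : ℕ) : Sig4 s₂ ν → ℤ :=
  Sum.elim (fun _ => 1) (Sum.elim (fun _ => 2) (fun _ => 3))

/-- `w i` (`1`-based): the `i`-th point of `Σ₄ = {w_1, …, w_{2^ν}}`. -/
def wPt4 (s₂ ν : ℕ) (i : ℕ) : Sig4 s₂ ν :=
  Sum.inr (Sum.inl ⟨(i - 1) % 2 ^ ν, Nat.mod_lt _ (Nat.pow_pos (by norm_num))⟩)

/-- `t i` (`1`-based): the `i`-th point of `Σ₆ = {t_1, …, t_{2^ν}}`. -/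
def tPt4 (s₂ ν : ℕ) (i : ℕ) : Sig4 s₂ ν :=
  Sum.inr (Sum.inr ⟨(i - 1) % 2 ^ ν, Nat.mod_lt _ (Nat.pow_pos (by norm_num))⟩)

/-- The generators `u_j` (`1`-based, `u_0 := Ψ w` with `w = w_{2^ν - 1}`):
for `1 ≤ k ≤ 2^{ν-1} - 2`, `u_{2k-1} = Ψ w_{2k-1} - Ψ w` and
`u_{2k} = Ψ w_{2k-1} + Ψ w_{2k} - Ψ w - Ψ w'` (with `w' = w_{2^ν}`); and
`u_{2^ν-3} = Ψ w_{2^ν-3} - Ψ w` (the odd-index formula again),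
`u_{2^ν-2} = Ψ w_{2^ν-3} - Ψ w_{2^ν-2}`. -/
noncomputable def uGen4 (s₂ ν : ℕ) : ℕ → CompGrp (e4 s₂ ν) := fun j =>
  if j = 0 then Psi (e4 s₂ ν) (wPt4 s₂ ν (2 ^ ν - 1))
  else if j = 2 ^ ν - 2 then
    Psi (e4 s₂ ν) (wPt4 s₂ ν (2 ^ ν - 3)) - Psi (e4 s₂ ν) (wPt4 s₂ ν (2 ^ ν - 2))
  else if j % 2 = 1 then
    Psi (e4 s₂ ν) (wPt4 s₂ ν j) - Psi (e4 s₂ ν) (wPt4 s₂ ν (2 ^ ν - 1))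
  else
    Psi (e4 s₂ ν) (wPt4 s₂ ν (j - 1)) + Psi (e4 s₂ ν) (wPt4 s₂ ν j)
      - Psi (e4 s₂ ν) (wPt4 s₂ ν (2 ^ ν - 1)) - Psi (e4 s₂ ν) (wPt4 s₂ ν (2 ^ ν))

/-- The generators `v_j` (`1`-based): `v_{2k-1} = Ψ t_{2k-1} - Ψ t_{2k}` for
`1 ≤ k ≤ 2^{ν-1}` and `v_{2k} = Ψ t_{2k-1} + Ψ t_{2k} - Ψ t - Ψ t'` for
`1 ≤ k ≤ 2^{ν-1} - 1` (with `t = t_{2^ν - 1}`, `t' = t_{2^ν}`). -/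
noncomputable def vGen4 (s₂ ν : ℕ) : ℕ → CompGrp (e4 s₂ ν) := fun j =>
  if j % 2 = 1 then
    Psi (e4 s₂ ν) (tPt4 s₂ ν j) - Psi (e4 s₂ ν) (tPt4 s₂ ν (j + 1))
  else
    Psi (e4 s₂ ν) (tPt4 s₂ ν (j - 1)) + Psi (e4 s₂ ν) (tPt4 s₂ ν j)
      - Psi (e4 s₂ ν) (tPt4 s₂ ν (2 ^ ν - 1)) - Psi (e4 s₂ ν) (tPt4 s₂ ν (2 ^ ν))

/-!
Write `A := Ψ_w`. The relations say `e(s) Ψ_s = 2A` for every `s`, so `Ψ_s = 2A` on `Σ₂`,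
`2 Ψ_{w_i} = 2A` and `3 Ψ_{t_i} = 2A`. Writing `P₂, P_W, P_T` for the sums of `Ψ` over
`Σ₂, Σ₄, Σ₆`, one has `P₂ + P_W + P_T = 0`, hence
`P_W = 3(P₂ + P_W + P_T) - 3P₂ - 2P_W - 3P_T = -6s₂A - 2^ν·2A - 2^ν·2A`.
-/

section CompGrp

variable {S : Type*} [Fintype S] (e : S → ℤ)

theorem smul_Psi_eq_smul_Psi (s t : S) : e s • Psi e s = e t • Psi e t := by
  have hmem : Finsupp.single s (e s) - Finsupp.single t (e t) ∈ relSub e :=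
    AddSubgroup.subset_closure (Or.inl ⟨s, t, rfl⟩)
  rw [← QuotientAddGroup.eq_zero_iff, QuotientAddGroup.mk_sub, sub_eq_zero] at hmem
  simpa [Psi, ← QuotientAddGroup.mk_zsmul, Finsupp.smul_single'] using hmem

theorem sum_Psi_eq_zero : ∑ s : S, Psi e s = 0 := by
  have hmem : ∑ s : S, Finsupp.single s (1 : ℤ) ∈ relSub e :=
    AddSubgroup.subset_closure (Or.inr rfl)
  rw [← QuotientAddGroup.eq_zero_iff, ← QuotientAddGroup.mk'_apply, map_sum] at hmem
  exact hmem

theorem smul_sum_Psi_of_forall_eq {ι : Type*} [Fintype ι] (f : ι → S) {c : ℤ}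
    (hc : ∀ i, e (f i) = c) (s₀ : S) :
    c • ∑ i, Psi e (f i) = (Fintype.card ι : ℤ) • (e s₀ • Psi e s₀) := by
  calc c • ∑ i, Psi e (f i) = ∑ _i : ι, e s₀ • Psi e s₀ := by
        rw [Finset.smul_sum]
        exact Finset.sum_congr rfl fun i _ => by rw [← hc i, smul_Psi_eq_smul_Psi]
    _ = (Fintype.card ι : ℤ) • (e s₀ • Psi e s₀) := by
        rw [Finset.sum_const, Finset.card_univ, natCast_zsmul]

end CompGrp

theorem Finset.sum_Icc_one_mod_eq_sum_fin {M : Type*} [AddCommMonoid M] {n : ℕ} (hn : 0 < n)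
    (f : Fin n → M) :
    ∑ i ∈ Finset.Icc 1 n, f ⟨(i - 1) % n, Nat.mod_lt _ hn⟩ = ∑ j : Fin n, f j := by
  rw [← Finset.Ico_add_one_right_eq_Icc, Finset.sum_Ico_eq_sum_range,
    ← Fin.sum_univ_eq_sum_range (fun k => f ⟨(1 + k - 1) % n, Nat.mod_lt _ hn⟩)]
  simp [Nat.mod_eq_of_lt]

theorem sum_Psi_wPt4 (s₂ ν : ℕ) :
    ∑ i ∈ Finset.Icc 1 (2 ^ ν), Psi (e4 s₂ ν) (wPt4 s₂ ν i) =
      ∑ j : Fin (2 ^ ν), Psi (e4 s₂ ν) (Sum.inr (Sum.inl j)) :=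
  Finset.sum_Icc_one_mod_eq_sum_fin (Nat.two_pow_pos ν) fun j =>
    Psi (e4 s₂ ν) (Sum.inr (Sum.inl j))

theorem stmt12_general (s₂ ν : ℕ) :
    ∑ i ∈ Finset.Icc 1 (2 ^ ν), Psi (e4 s₂ ν) (wPt4 s₂ ν i) =
      -((6 * s₂ + 4 * 2 ^ ν) • Psi (e4 s₂ ν) (wPt4 s₂ ν (2 ^ ν - 1))) := by
  set e := e4 s₂ ν
  set w := wPt4 s₂ ν (2 ^ ν - 1)
  rw [sum_Psi_wPt4]
  have hsum := sum_Psi_eq_zero e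
  rw [Fintype.sum_sum_type, Fintype.sum_sum_type] at hsum
  have h₂ := smul_sum_Psi_of_forall_eq e (Sum.inl : Fin s₂ → Sig4 s₂ ν) (c := 1)
    (fun _ => rfl) w
  have h₄ := smul_sum_Psi_of_forall_eq e (fun j : Fin (2 ^ ν) => Sum.inr (Sum.inl j)) (c := 2)
    (fun _ => rfl) w
  have h₆ := smul_sum_Psi_of_forall_eq e (fun j : Fin (2 ^ ν) => Sum.inr (Sum.inr j)) (c := 3)
    (fun _ => rfl) w
  have hw : e w = 2 := rfl
  simp only [Fintype.card_fin, hw] at h₂ h₄ h₆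
  linear_combination (norm := module) 3 • hsum - 3 • h₂ - h₄ - h₆

/-- in `G(Σ, e)` one has `∑_{i=1}^{2^ν} Ψ w_i = -(6s₂ + 4·2^ν) • Ψ w`,
where `w = w_{2^ν - 1}`. -/
theorem stmt12 (s₂ ν : ℕ) (hν : 1 ≤ ν) :
    ∑ i ∈ Finset.Icc 1 (2 ^ ν), Psi (e4 s₂ ν) (wPt4 s₂ ν i) =
      -((6 * s₂ + 4 * 2 ^ ν) • Psi (e4 s₂ ν) (wPt4 s₂ ν (2 ^ ν - 1))) :=
  stmt12_general s₂ ν
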